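/- For all positive integers Δ ≥ 2 and d, the full d-ary tree T_Δ of height Δ satisfies tw_{Δ-1}(T_Δ) ≥ d - 1. -/

import Mathlib

/-- A rooted tree-decomposition of a graph `H`: nodes are `Fin n`, with a root and a
parent function (the root is its own parent, every node reaches the root by iterating
the parent). Bags satisfy edge coverage and, for each vertex, the bags containing it
form a (connected) subtree; vertex coverage is included in the subtree condition. -/
structure TreeDecomp (V : Type) [Fintype V] [DecidableEq V] (H : SimpleGraph V) where
  n : ℕ
  npos : 0 < n
  root : Fin n
  parent : Fin n → Fin n
  parent_root : parent root = root
  reaches : ∀ t, ∃ k, parent^[k] t = root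
  bag : Fin n → Finset V
  edge_cover : ∀ u v : V, H.Adj u v → ∃ t, u ∈ bag t ∧ v ∈ bag t
  subtree : ∀ v : V, ∃ r, v ∈ bag r ∧
      ∀ t, v ∈ bag t → ∃ k, parent^[k] t = r ∧ ∀ j ≤ k, v ∈ bag (parent^[j] t)

namespace TreeDecomp

variable {V : Type} [Fintype V] [DecidableEq V] {H : SimpleGraph V}

/-- The width of a tree-decomposition: maximum bag size minus one. -/
def width (D : TreeDecomp V H) : ℕ :=
  (Finset.univ.sup fun t => (D.bag t).card) - 1

/-- The tree has height at most `Δ`: every node reaches the root in fewer than `Δ`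
parent steps (so every root-to-leaf path has at most `Δ` vertices). -/
def HeightLE (D : TreeDecomp V H) (Δ : ℕ) : Prop :=
  ∀ t, ∃ k < Δ, D.parent^[k] t = D.root

end TreeDecomp

/-- `Δ`-treewidth: minimum width over tree-decompositions of height at most `Δ`
(`⊤` if none exists). -/
noncomputable def twD {V : Type} [Fintype V] [DecidableEq V] (Δ : ℕ) (H : SimpleGraph V) : ℕ∞ :=
  sInf {w : ℕ∞ | ∃ D : TreeDecomp V H, D.HeightLE Δ ∧ (D.width : ℕ∞) = w}

/-- The full d-ary tree of height Δ: vertices are pairs of a depth k < Δ and a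
sequence of k child-indices; edges join each node to its one-step extensions. -/
def fullDAryTree (d Δ : ℕ) : SimpleGraph (Σ k : Fin Δ, Fin (k : ℕ) → Fin d) :=
  SimpleGraph.fromRel (fun x y =>
    ∃ h : (x.1 : ℕ) + 1 = (y.1 : ℕ),
      ∀ i : Fin (x.1 : ℕ), y.2 (Fin.castLE (by omega) i) = x.2 i)

/-!
Every vertex `v` has a highest bag containing it, `D.topNode v`. If `uv` is an edge, then
either `v` lies in the highest bag of `u`, or the highest bag of `v` lies strictly below that
of `u`: both vertices occupy the tree path from a common bag up to their highest bags. So unless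
some bag holds a vertex together with all `d` of its children, one can walk down the full
`d`-ary tree from its root, one level per step, while the depth of the highest bag strictly
increases. Reaching depth `Δ - 1` at the last level contradicts height at most `Δ - 1`.
-/

namespace TreeDecomp

variable {V : Type} [Fintype V] [DecidableEq V] {H : SimpleGraph V} (D : TreeDecomp V H)

noncomputable def depth (t : Fin D.n) : ℕ := Nat.find (D.reaches t)

lemma iterate_depth (t : Fin D.n) : D.parent^[D.depth t] t = D.root :=
  Nat.find_spec (D.reaches t)

variable {D}

lemma depth_le_of_iterate {t : Fin D.n} {k : ℕ} (h : D.parent^[k] t = D.root) :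
    D.depth t ≤ k :=
  Nat.find_le h

lemma HeightLE.depth_lt {m : ℕ} (hD : D.HeightLE m) (t : Fin D.n) : D.depth t < m := by
  obtain ⟨k, hk, hkt⟩ := hD t
  exact (depth_le_of_iterate hkt).trans_lt hk

lemma depth_lt_of_iterate {s x : Fin D.n} {j : ℕ} (hx : D.parent^[j] s = x) (hne : x ≠ s) :
    D.depth x < D.depth s := by
  have hj : j ≠ 0 := by rintro rfl; exact hne hx.symm
  by_cases hjs : j ≤ D.depth s
  · have hxroot : D.parent^[D.depth s - j] x = D.root := by
      rw [← hx, ← Function.iterate_add_apply, Nat.sub_add_cancel hjs, D.iterate_depth]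
    have := depth_le_of_iterate hxroot
    omega
  · have hxroot : x = D.root := by
      rw [← hx, show j = (j - D.depth s) + D.depth s by omega, Function.iterate_add_apply,
        D.iterate_depth, Function.iterate_fixed D.parent_root]
    have hx0 : D.depth x = 0 := Nat.le_zero.mp (depth_le_of_iterate (k := 0) hxroot)
    have hs0 : D.depth s ≠ 0 := by
      intro hs0
      have hsroot := D.iterate_depth s
      rw [hs0] at hsroot
      exact hne (hxroot.trans hsroot.symm)
    omega

variable (D)

lemma card_bag_le_width_add_one (t : Fin D.n) : (D.bag t).card ≤ D.width + 1 := by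
  have := Finset.le_sup (f := fun t => (D.bag t).card) (Finset.mem_univ t)
  unfold width
  omega

noncomputable def topNode (v : V) : Fin D.n := (D.subtree v).choose

lemma mem_bag_topNode (v : V) : v ∈ D.bag (D.topNode v) :=
  (D.subtree v).choose_spec.1

lemma exists_iterate_eq_topNode {v : V} {t : Fin D.n} (hv : v ∈ D.bag t) :
    ∃ k, D.parent^[k] t = D.topNode v ∧ ∀ j ≤ k, v ∈ D.bag (D.parent^[j] t) :=
  (D.subtree v).choose_spec.2 t hv

variable {D}

lemma mem_bag_topNode_or_depth_lt {u v : V} (huv : H.Adj u v) :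
    v ∈ D.bag (D.topNode u) ∨ D.depth (D.topNode u) < D.depth (D.topNode v) := by
  obtain ⟨t, hut, hvt⟩ := D.edge_cover u v huv
  obtain ⟨k, hk, -⟩ := D.exists_iterate_eq_topNode hut
  obtain ⟨m, hm, hvpath⟩ := D.exists_iterate_eq_topNode hvt
  by_cases hkm : k ≤ m
  · exact .inl (hk ▸ hvpath k hkm)
  by_cases htop : D.topNode u = D.topNode v
  · exact .inl (htop ▸ D.mem_bag_topNode v)
  refine .inr (depth_lt_of_iterate (j := k - m) ?_ htop)
  rw [← hm, ← Function.iterate_add_apply, Nat.sub_add_cancel (by omega), hk]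

lemma exists_depth_topNode_lt {u : V} {S : Finset V} (hS : ∀ s ∈ S, H.Adj u s)
    (hcard : (D.bag (D.topNode u)).card ≤ S.card) :
    ∃ s ∈ S, D.depth (D.topNode u) < D.depth (D.topNode s) := by
  by_contra! hshallow
  have hsub : insert u S ⊆ D.bag (D.topNode u) := by
    refine Finset.insert_subset (D.mem_bag_topNode u) fun s hs => ?_
    exact (mem_bag_topNode_or_depth_lt (hS s hs)).resolve_right (hshallow s hs).not_gt
  have huS : u ∉ S := fun hu => (hS u hu).ne rfl
  have := Finset.card_le_card hsub
  rw [Finset.card_insert_of_notMem huS] at this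
  omega

end TreeDecomp

namespace fullDAryTree

variable {d Δ : ℕ}

def child (x : Σ k : Fin Δ, Fin (k : ℕ) → Fin d) (hx : (x.1 : ℕ) + 1 < Δ) (a : Fin d) :
    Σ k : Fin Δ, Fin (k : ℕ) → Fin d :=
  ⟨⟨x.1 + 1, hx⟩, Fin.snoc x.2 a⟩

lemma adj_child (x : Σ k : Fin Δ, Fin (k : ℕ) → Fin d) (hx : (x.1 : ℕ) + 1 < Δ) (a : Fin d) :
    (fullDAryTree d Δ).Adj x (child x hx a) := by
  refine SimpleGraph.fromRel_adj _ _ _ |>.mpr ⟨fun h => ?_, .inl ⟨rfl, fun i => ?_⟩⟩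
  · have := congrArg (fun y => (y.1 : ℕ)) h
    simp [child] at this
  · exact Fin.snoc_castSucc (α := fun _ => Fin d) ..

lemma child_injective (x : Σ k : Fin Δ, Fin (k : ℕ) → Fin d) (hx : (x.1 : ℕ) + 1 < Δ) :
    Function.Injective (child x hx) := by
  intro a b hab
  have := congrFun (eq_of_heq (Sigma.mk.inj hab).2) (Fin.last _)
  simpa using this

lemma exists_le_depth_topNode (D : TreeDecomp _ (fullDAryTree d Δ))
    (hbag : ∀ t, (D.bag t).card ≤ d) :
    ∀ i < Δ, ∃ x : Σ k : Fin Δ, Fin (k : ℕ) → Fin d, (x.1 : ℕ) = i ∧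
      i ≤ D.depth (D.topNode x) := by
  intro i
  induction i with
  | zero => exact fun hΔ => ⟨⟨⟨0, hΔ⟩, Fin.elim0⟩, rfl, Nat.zero_le _⟩
  | succ i ih =>
    intro hi
    obtain ⟨x, rfl, hx⟩ := ih (by omega)
    set children := Finset.univ.image (child x hi)
    have hadj : ∀ y ∈ children, (fullDAryTree d Δ).Adj x y := by
      simp only [children, Finset.mem_image, Finset.mem_univ, true_and]
      rintro _ ⟨a, rfl⟩
      exact adj_child x hi a
    have hcard : children.card = d := by
      rw [Finset.card_image_of_injective _ (child_injective x hi), Finset.card_fin]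
    obtain ⟨y, hy, hdeep⟩ :=
      TreeDecomp.exists_depth_topNode_lt hadj (by rw [hcard]; exact hbag _)
    obtain ⟨a, -, rfl⟩ := Finset.mem_image.mp hy
    exact ⟨child x hi a, rfl, by omega⟩

lemma exists_card_bag_gt (D : TreeDecomp _ (fullDAryTree d Δ)) (hD : D.HeightLE (Δ - 1)) :
    ∃ t, d < (D.bag t).card := by
  by_contra! hbag
  have hΔ := hD.depth_lt D.root
  obtain ⟨x, -, hx⟩ := exists_le_depth_topNode D hbag (Δ - 1) (by omega)
  exact (hD.depth_lt (D.topNode x)).not_ge hx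

end fullDAryTree

theorem twD_fullDAryTree_lb_general (d Δ : ℕ) :
    ((d - 1 : ℕ) : ℕ∞) ≤ twD (Δ - 1) (fullDAryTree d Δ) := by
  refine le_sInf ?_
  rintro _ ⟨D, hD, rfl⟩
  obtain ⟨t, ht⟩ := fullDAryTree.exists_card_bag_gt D hD
  have hwidth : d - 1 ≤ D.width := by
    have := D.card_bag_le_width_add_one t
    omega
  exact_mod_cast hwidth

/-- for Δ ≥ 2, the full d-ary tree of height Δ has
(Δ-1)-treewidth at least d - 1. -/
theorem twD_fullDAryTree_lb (d Δ : ℕ) (hd : 0 < d) (hΔ : 2 ≤ Δ) :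
    ((d - 1 : ℕ) : ℕ∞) ≤ twD (Δ - 1) (fullDAryTree d Δ) :=
  twD_fullDAryTree_lb_general d Δ
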